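/- arXiv:1505.07141 — 2 statements merged into one kernel-verified Lean document; each statement's English description precedes it below -/
import Mathlib

section
/- The point P = (-2, 1) on the elliptic curve E : y^2 = x^3 + 5x^2 + 6x + 1 over ℚ has infinite order in E(ℚ). -/
/-!
Write `x = a / b` in lowest terms. Doubling on `E` sends `x` to `A(a, b) / B(a, b)` for binary
quartic forms `A`, `B`, and there are cubic forms `u, v, u', v'` with `u A + v B = 196 b⁷` and
`u' A + v' B = 196 a⁷`. Hence `gcd(A, B) ∣ 196` while `max(|A|, |B|) ≫ max(|a|, |b|)⁴`, so the
naive height satisfies `H(x)⁴ ≤ 25396 H(x(2Q))`, and it at least doubles under `Q ↦ 2Q` once it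
is `≥ 38`. As `x(8P) = 12/169`, the heights of the points `2ᵏ • 8P` are unbounded, whereas a point
of finite order has only finitely many multiples.
-/

/-- The elliptic curve `E : y² = x³ + 5x² + 6x + 1` over `ℚ`. -/
def E : WeierstrassCurve.Affine ℚ :=
  { a₁ := 0, a₂ := 5, a₃ := 0, a₄ := 6, a₆ := 1 }

open Height WeierstrassCurve.Affine

theorem IsCoprime.dvd_of_dvd_mul_pow {R : Type*} [CommRing R] {a b r t : R} (hab : IsCoprime a b)
    (n : ℕ) (ha : t ∣ r * a ^ n) (hb : t ∣ r * b ^ n) : t ∣ r := by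
  obtain ⟨u, v, huv⟩ := hab.pow (m := n) (n := n)
  have : r = u * (r * a ^ n) + v * (r * b ^ n) := by linear_combination -r * huv
  rw [this]
  exact dvd_add (ha.mul_left u) (hb.mul_left v)

section

variable {R : Type*} [CommRing R] [LinearOrder R] [IsStrictOrderedRing R]

theorem abs_mul_add_mul_le (u v A B : R) : |u * A + v * B| ≤ (|u| + |v|) * max |A| |B| := by
  calc |u * A + v * B| ≤ |u| * |A| + |v| * |B| := by
        simpa only [abs_mul] using abs_add_le (u * A) (v * B)
    _ ≤ |u| * max |A| |B| + |v| * max |A| |B| := by gcongr <;> simp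
    _ = (|u| + |v|) * max |A| |B| := by ring

theorem abs_cubic_form_le (c₀ c₁ c₂ c₃ a b : R) :
    |c₀ * a ^ 3 + c₁ * a ^ 2 * b + c₂ * a * b ^ 2 + c₃ * b ^ 3|
      ≤ (|c₀| + |c₁| + |c₂| + |c₃|) * max |a| |b| ^ 3 := by
  set H := max |a| |b|
  have ha : |a| ≤ H := le_max_left _ _
  have hb : |b| ≤ H := le_max_right _ _
  calc _ ≤ |c₀| * |a| ^ 3 + |c₁| * |a| ^ 2 * |b| + |c₂| * |a| * |b| ^ 2 + |c₃| * |b| ^ 3 := by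
        simp only [← abs_pow, ← abs_mul]
        exact (abs_add_le _ _).trans (by gcongr; exact abs_add_three _ _ _)
    _ ≤ |c₀| * H ^ 3 + |c₁| * H ^ 2 * H + |c₂| * H * H ^ 2 + |c₃| * H ^ 3 := by gcongr
    _ = (|c₀| + |c₁| + |c₂| + |c₃|) * H ^ 3 := by ring

end

theorem Rat.max_abs_eq_gcd_mul_mulHeight₁ (A B : ℤ) :
    ((max |A| |B| : ℤ) : ℝ) = A.gcd B * mulHeight₁ ((A : ℚ) / B) := by
  rcases (Int.gcd A B).eq_zero_or_pos with h0 | hpos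
  · obtain ⟨rfl, rfl⟩ := Int.gcd_eq_zero_iff.mp h0
    simp
  obtain ⟨g, A', B', hg, hcop, rfl, rfl⟩ := Int.exists_gcd_one' hpos
  have hvec : ![((A' * g : ℤ) : ℚ), ((B' * g : ℤ) : ℚ)] = (g : ℚ) • (Int.cast ∘ ![A', B']) := by
    ext i; fin_cases i <;> simp [mul_comm]
  have hgcd : Finset.univ.gcd ![A', B'] = 1 := by
    simpa [Finset.univ_fin2, ← Int.abs_eq_normalize, ← Int.coe_gcd, Int.gcd_eq_natAbs_gcd_natAbs,
      Int.natAbs_abs] using hcop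
  have hsup : ⨆ i, |![A', B'] i| = max |A'| |B'| :=
    le_antisymm (ciSup_le fun i => by fin_cases i <;> simp)
      (max_le (Finite.le_ciSup_of_le 0 le_rfl) (Finite.le_ciSup_of_le 1 le_rfl))
  rw [mulHeight₁_div_eq_mulHeight, hvec, mulHeight_smul_eq_mulHeight _ (by positivity),
    Rat.mulHeight_eq_max_abs_of_gcd_eq_one hgcd, Int.gcd_mul_right, hcop, hsup]
  push_cast
  simp [abs_mul, ← max_mul_of_nonneg, mul_comm]

namespace WeierstrassCurve.Affine.Point

variable {K : Type*} [Field K] [AdmissibleAbsValues K] {W : WeierstrassCurve.Affine K}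

noncomputable def naiveHeight : W.Point → ℝ
  | zero => 1
  | some x _ _ => mulHeight₁ x

@[simp]
theorem naiveHeight_zero : naiveHeight (0 : W.Point) = 1 := rfl

@[simp]
theorem naiveHeight_some {x y : K} (h : W.Nonsingular x y) :
    naiveHeight (some x y h) = mulHeight₁ x :=
  rfl

end WeierstrassCurve.Affine.Point

open WeierstrassCurve.Affine.Point

def doubleX (x : ℚ) : ℚ := (x ^ 4 - 12 * x ^ 2 - 8 * x + 16) / (4 * (x ^ 3 + 5 * x ^ 2 + 6 * x + 1))

def doubleXNum (a b : ℤ) : ℤ := a ^ 4 - 12 * a ^ 2 * b ^ 2 - 8 * a * b ^ 3 + 16 * b ^ 4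

def doubleXDen (a b : ℤ) : ℤ := 4 * b * (a ^ 3 + 5 * a ^ 2 * b + 6 * a * b ^ 2 + b ^ 3)

theorem doubleX_bezout_b (a b : ℤ) :
    (0 * a ^ 3 + -12 * a ^ 2 * b + -40 * a * b ^ 2 + 4 * b ^ 3) * doubleXNum a b
      + (3 * a ^ 3 + -5 * a ^ 2 * b + -30 * a * b ^ 2 + 33 * b ^ 3) * doubleXDen a b
      = 196 * b ^ 7 := by
  unfold doubleXNum doubleXDen; ring

theorem doubleX_bezout_a (a b : ℤ) :
    (196 * a ^ 3 + -4096 * a ^ 2 * b + -7120 * a * b ^ 2 + -1248 * b ^ 3) * doubleXNum a b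
      + (1024 * a ^ 3 + -2752 * a ^ 2 * b + -3968 * a * b ^ 2 + 4992 * b ^ 3) * doubleXDen a b
      = 196 * a ^ 7 := by
  unfold doubleXNum doubleXDen; ring

theorem gcd_doubleXNum_doubleXDen_dvd {a b : ℤ} (hab : IsCoprime a b) :
    (Int.gcd (doubleXNum a b) (doubleXDen a b) : ℤ) ∣ 196 := by
  have hcommon {t : ℤ} (hN : t ∣ doubleXNum a b) (hD : t ∣ doubleXDen a b) (u v : ℤ) :
      t ∣ u * doubleXNum a b + v * doubleXDen a b :=
    dvd_add (hN.mul_left u) (hD.mul_left v)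
  refine hab.dvd_of_dvd_mul_pow 7 ?_ ?_
  · rw [← doubleX_bezout_a]; exact hcommon (Int.gcd_dvd_left _ _) (Int.gcd_dvd_right _ _) _ _
  · rw [← doubleX_bezout_b]; exact hcommon (Int.gcd_dvd_left _ _) (Int.gcd_dvd_right _ _) _ _

theorem max_abs_pow_four_le_max_abs_doubleX (a b : ℤ) :
    196 * max |a| |b| ^ 4 ≤ 25396 * max |doubleXNum a b| |doubleXDen a b| := by
  set H := max |a| |b| with hH
  set M := max |doubleXNum a b| |doubleXDen a b|
  have hM : 0 ≤ M := le_max_of_le_left (abs_nonneg _)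
  have hH0 : 0 ≤ H := le_max_of_le_left (abs_nonneg _)
  have bound {r : ℤ} {u v : ℤ} (cu cv : ℤ) (hu : |u| ≤ cu * H ^ 3) (hv : |v| ≤ cv * H ^ 3)
      (huv : u * doubleXNum a b + v * doubleXDen a b = 196 * r ^ 7) (hc : cu + cv ≤ 25396) :
      196 * |r| ^ 7 ≤ 25396 * H ^ 3 * M := by
    calc 196 * |r| ^ 7 = |u * doubleXNum a b + v * doubleXDen a b| := by
          rw [huv, abs_mul, abs_pow]; norm_num
      _ ≤ (|u| + |v|) * M := abs_mul_add_mul_le _ _ _ _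
      _ ≤ (cu * H ^ 3 + cv * H ^ 3) * M := by gcongr
      _ ≤ 25396 * H ^ 3 * M := by nlinarith [mul_nonneg (pow_nonneg hH0 3) hM]
  have hb := bound 56 71 ((abs_cubic_form_le _ _ _ _ a b).trans_eq (by norm_num [H]))
    ((abs_cubic_form_le _ _ _ _ a b).trans_eq (by norm_num [H])) (doubleX_bezout_b a b)
    (by norm_num)
  have ha := bound 12660 12736 ((abs_cubic_form_le _ _ _ _ a b).trans_eq (by norm_num [H]))
    ((abs_cubic_form_le _ _ _ _ a b).trans_eq (by norm_num [H])) (doubleX_bezout_a a b)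
    (by norm_num)
  have cancel {r : ℤ} (hr : 0 ≤ r) (h : 196 * r ^ 7 ≤ 25396 * r ^ 3 * M) :
      196 * r ^ 4 ≤ 25396 * M := by
    rcases hr.eq_or_lt with rfl | hpos
    · positivity
    · exact le_of_mul_le_mul_right (a := r ^ 3) (by linear_combination h) (by positivity)
  clear_value H
  obtain h | h := max_choice |a| |b| <;> rw [← hH] at h <;> subst h
  exacts [cancel (abs_nonneg a) ha, cancel (abs_nonneg b) hb]

theorem doubleX_intCast_div (a b : ℤ) (hb : b ≠ 0) :
    doubleX (a / b) = (doubleXNum a b : ℚ) / doubleXDen a b := by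
  have hb4 : (b : ℚ) ^ 4 ≠ 0 := by positivity
  have hN : ((a : ℚ) / b) ^ 4 - 12 * (a / b) ^ 2 - 8 * (a / b) + 16 = doubleXNum a b / b ^ 4 := by
    simp only [doubleXNum]; push_cast; field_simp
  have hD :
      4 * (((a : ℚ) / b) ^ 3 + 5 * (a / b) ^ 2 + 6 * (a / b) + 1) = doubleXDen a b / b ^ 4 := by
    simp only [doubleXDen]; push_cast; field_simp
  rw [doubleX, hN, hD, div_div_div_cancel_right₀ hb4]

theorem mulHeight₁_pow_four_le_mulHeight₁_doubleX (x : ℚ) :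
    mulHeight₁ x ^ 4 ≤ 25396 * mulHeight₁ (doubleX x) := by
  set a := x.num
  set b : ℤ := (x.den : ℤ)
  have hcop : IsCoprime a b := Rat.isCoprime_num_den x
  have hab : (a : ℚ) / b = x := by simp only [a, b, Int.cast_natCast, Rat.num_div_den]
  have hx : ((max |a| |b| : ℤ) : ℝ) = mulHeight₁ x := by
    rw [Rat.max_abs_eq_gcd_mul_mulHeight₁, Int.isCoprime_iff_gcd_eq_one.mp hcop, hab, Nat.cast_one,
      one_mul]
  have hdbl : ((max |doubleXNum a b| |doubleXDen a b| : ℤ) : ℝ) ≤ 196 * mulHeight₁ (doubleX x) := by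
    rw [Rat.max_abs_eq_gcd_mul_mulHeight₁, ← doubleX_intCast_div a b (by positivity), hab]
    gcongr
    exact_mod_cast Int.le_of_dvd (by norm_num) (gcd_doubleXNum_doubleXDen_dvd hcop)
  have hint : ((196 * max |a| |b| ^ 4 : ℤ) : ℝ)
      ≤ ((25396 * max |doubleXNum a b| |doubleXDen a b| : ℤ) : ℝ) :=
    Int.cast_le.mpr (max_abs_pow_four_le_max_abs_doubleX a b)
  rw [← hx]
  push_cast at hdbl hint ⊢
  linarith

theorem cubic_form_ne_zero {a b : ℤ} (hab : IsCoprime a b) :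
    a ^ 3 + 5 * a ^ 2 * b + 6 * a * b ^ 2 + b ^ 3 ≠ 0 := by
  intro h
  have parity : ∀ a b : ZMod 2,
      a ^ 3 + 5 * a ^ 2 * b + 6 * a * b ^ 2 + b ^ 3 = 0 → a = 0 ∧ b = 0 := by
    decide
  obtain ⟨ha, hb⟩ := parity a b (by exact_mod_cast congrArg (Int.cast : ℤ → ZMod 2) h)
  rw [ZMod.intCast_zmod_eq_zero_iff_dvd] at ha hb
  exact absurd (Int.isUnit_iff.mp (hab.isUnit_of_dvd' ha hb)) (by norm_num)

theorem cubic_ne_zero (x : ℚ) : x ^ 3 + 5 * x ^ 2 + 6 * x + 1 ≠ 0 := by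
  have hform :
      ((x.num ^ 3 + 5 * x.num ^ 2 * x.den + 6 * x.num * x.den ^ 2 + (x.den : ℤ) ^ 3 : ℤ) : ℚ)
        = x.den ^ 3 * (x ^ 3 + 5 * x ^ 2 + 6 * x + 1) := by
    push_cast
    rw [← Rat.mul_den_eq_num]
    ring
  intro hx
  rw [hx, mul_zero, Int.cast_eq_zero] at hform
  exact cubic_form_ne_zero (Rat.isCoprime_num_den x) hform

theorem exists_two_nsmul_eq_some_doubleX {x y : ℚ} (h : E.Nonsingular x y) :
    ∃ x' y' h', (2 : ℕ) • Point.some x y h = Point.some x' y' h' ∧ x' = doubleX x := by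
  have heq : y ^ 2 = x ^ 3 + 5 * x ^ 2 + 6 * x + 1 := by
    simpa [E, equation_iff] using h.1
  have hy : y ≠ 0 := by
    rintro rfl
    exact cubic_ne_zero x (by linear_combination -heq)
  have hy' : y ≠ E.negY x y := by
    simp only [negY, E]
    intro hc
    exact hy (by linarith)
  refine ⟨_, _, nonsingular_add h h (fun hxy => hy' hxy.2),
    by rw [two_nsmul, Point.add_self_of_Y_ne hy'], ?_⟩
  have hslope : E.slope x x y y = (3 * x ^ 2 + 10 * x + 6) / (2 * y) := by
    rw [slope_of_Y_ne rfl hy']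
    simp only [E, negY]
    ring
  have hf : 4 * (x ^ 3 + 5 * x ^ 2 + 6 * x + 1) ≠ 0 := mul_ne_zero four_ne_zero (cubic_ne_zero x)
  rw [addX, hslope, div_pow, mul_pow, heq, doubleX, eq_div_iff hf]
  simp only [E, zero_mul, add_zero, sub_mul]
  rw [show (2 : ℚ) ^ 2 = 4 by norm_num, div_mul_cancel₀ _ hf]
  ring

theorem naiveHeight_pow_four_le (Q : E.Point) :
    naiveHeight Q ^ 4 ≤ 25396 * naiveHeight (2 • Q) := by
  cases Q with
  | zero => norm_num [← zero_def]
  | some _ _ h =>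
    obtain ⟨_, _, _, hQ, rfl⟩ := exists_two_nsmul_eq_some_doubleX h
    rw [hQ, naiveHeight_some, naiveHeight_some]
    exact mulHeight₁_pow_four_le_mulHeight₁_doubleX _

theorem two_mul_naiveHeight_le {Q : E.Point} (hQ : 38 ≤ naiveHeight Q) :
    2 * naiveHeight Q ≤ naiveHeight (2 • Q) := by
  have := naiveHeight_pow_four_le Q
  -- `38 ^ 3 ≥ 2 * 25396`
  nlinarith [pow_le_pow_left₀ (by norm_num) hQ 3]

theorem two_pow_mul_naiveHeight_le {Q : E.Point} (hQ : 38 ≤ naiveHeight Q) (k : ℕ) :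
    2 ^ k * naiveHeight Q ≤ naiveHeight ((2 ^ k : ℕ) • Q) := by
  induction k with
  | zero => simp
  | succ k ih =>
    have hk : 38 ≤ naiveHeight ((2 ^ k : ℕ) • Q) :=
      hQ.trans (ih.trans' (le_mul_of_one_le_left (by linarith) (one_le_pow₀ one_le_two)))
    calc 2 ^ (k + 1) * naiveHeight Q ≤ 2 * naiveHeight ((2 ^ k : ℕ) • Q) := by
          rw [pow_succ']; linarith
      _ ≤ naiveHeight ((2 ^ (k + 1) : ℕ) • Q) := by
        rw [pow_succ', mul_nsmul']
        exact two_mul_naiveHeight_le hk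

theorem naiveHeight_eight_nsmul (h : E.Nonsingular (-2) 1) :
    naiveHeight ((2 ^ 3 : ℕ) • Point.some (-2) 1 h) = 169 := by
  obtain ⟨_, _, h₁, e₁, rfl⟩ := exists_two_nsmul_eq_some_doubleX h
  obtain ⟨_, _, h₂, e₂, rfl⟩ := exists_two_nsmul_eq_some_doubleX h₁
  obtain ⟨_, _, _, e₃, rfl⟩ := exists_two_nsmul_eq_some_doubleX h₂
  rw [show 2 ^ 3 = 2 * (2 * 2) by rfl, mul_nsmul', mul_nsmul', e₁, e₂, e₃, naiveHeight_some]
  norm_num [doubleX, Rat.mulHeight₁_eq_max]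

/-- The point `P = (-2, 1)` on `E : y² = x³ + 5x² + 6x + 1` has infinite order in `E(ℚ)`. -/
theorem P_infinite_order (h : E.Nonsingular (-2) 1) :
    ¬ IsOfFinAddOrder (WeierstrassCurve.Affine.Point.some (-2) 1 h) := by
  intro hfin
  set P := Point.some (-2) 1 h
  obtain ⟨B, hB⟩ := (hfin.finite_multiples.image naiveHeight).bddAbove
  obtain ⟨k, hk⟩ := pow_unbounded_of_one_lt B one_lt_two
  have hgrowth := two_pow_mul_naiveHeight_le (by rw [naiveHeight_eight_nsmul h]; norm_num) k
  rw [naiveHeight_eight_nsmul h, ← mul_nsmul] at hgrowth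
  have hbound : naiveHeight ((2 ^ 3 * 2 ^ k) • P) ≤ B := hB ⟨_, ⟨_, rfl⟩, rfl⟩
  linarith [pow_pos (two_pos : (0 : ℝ) < 2) k]
end

section
/- If p and q are distinct odd primes ≥ 5, then the elliptic curves E_p : y^2 = x(x+p+1)(x-p+1) and E_q : y^2 = x(x+q+1)(x-q+1) have distinct j-invariants, hence are not geometrically isomorphic. -/
/-!
Here `j(E_n) = 64 (1 + 3n²)³ / (n² (n² - 1)²)`. For an odd prime `p` the prime `p` divides the
denominator but is coprime to the numerator. If `q < p` is odd, then `p` divides none of `q`,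
`q - 1`, `q + 1` (the last one is even and at most `p`), so `p` does not divide the denominator
of `j(E_q)`. Cross-multiplying `j(E_p) = j(E_q)` and reducing mod `p` gives a contradiction.
-/

/-- The elliptic curve `E_p : y² = x(x + p + 1)(x - p + 1) = x³ + 2x² + (1 - p²)x` over `ℚ`. -/
def Ep (p : ℕ) : WeierstrassCurve.Affine ℚ :=
  { a₁ := 0, a₂ := 2, a₃ := 0, a₄ := 1 - (p : ℚ) ^ 2, a₆ := 0 }

def jNum (n : ℤ) : ℤ := 64 * (1 + 3 * n ^ 2) ^ 3

def jDen (n : ℤ) : ℤ := n ^ 2 * (n ^ 2 - 1) ^ 2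

lemma Ep_c₄ (p : ℕ) : (Ep p).c₄ = 16 * (1 + 3 * (p : ℚ) ^ 2) := by
  simp only [WeierstrassCurve.c₄, WeierstrassCurve.b₂, WeierstrassCurve.b₄, Ep]
  ring

lemma Ep_Δ (p : ℕ) : (Ep p).Δ = 64 * (jDen p : ℚ) := by
  simp only [WeierstrassCurve.Δ, WeierstrassCurve.b₂, WeierstrassCurve.b₄, WeierstrassCurve.b₆,
    WeierstrassCurve.b₈, Ep, jDen]
  push_cast
  ring

lemma Ep_j (p : ℕ) [(Ep p).IsElliptic] : (Ep p).j = (jNum p : ℚ) / jDen p := by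
  rw [WeierstrassCurve.j, Units.val_inv_eq_inv_val, WeierstrassCurve.coe_Δ', inv_mul_eq_div,
    Ep_c₄, Ep_Δ, jNum]
  push_cast
  ring

lemma jDen_ne_zero {n : ℤ} (hn : 1 < n) : jDen n ≠ 0 := by
  have : n ^ 2 - 1 ≠ 0 := by nlinarith
  unfold jDen
  positivity

lemma dvd_jDen_self (n : ℤ) : n ∣ jDen n :=
  ⟨n * (n ^ 2 - 1) ^ 2, by rw [jDen]; ring⟩

lemma isCoprime_jNum_self {n : ℤ} (hn : Odd n) : IsCoprime n (jNum n) := by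
  have hcop : IsCoprime n (1 + 3 * n ^ 2) := ⟨-3 * n, 1, by ring⟩
  rw [jNum, show (64 : ℤ) = 2 ^ 6 by norm_num]
  exact (Int.isCoprime_two_right.mpr hn).pow_right.mul_right hcop.pow_right

lemma not_dvd_jDen_of_lt {p q : ℤ} (hp : Prime p) (hop : Odd p) (hoq : Odd q) (hq : 1 < q)
    (hqp : q < p) : ¬ p ∣ jDen q := by
  have hfactor : jDen q = (q * (q - 1) * (q + 1)) ^ 2 := by rw [jDen]; ring
  have hne : p ≠ q + 1 := fun h => Int.not_even_iff_odd.mpr hop (h ▸ hoq.add_one)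
  rw [hfactor]
  intro h
  obtain (h | h) | h := (hp.dvd_or_dvd (hp.dvd_of_dvd_pow h)).imp_left hp.dvd_or_dvd
  all_goals exact absurd (Int.le_of_dvd (by omega) h) (by omega)

lemma jNum_mul_jDen_ne {p q : ℤ} (hp : Prime p) (hop : Odd p) (hoq : Odd q) (hq : 1 < q)
    (hqp : q < p) : jNum p * jDen q ≠ jNum q * jDen p := by
  intro h
  have hdvd : p ∣ jNum p * jDen q := h ▸ dvd_mul_of_dvd_right (dvd_jDen_self p) _
  rcases hp.dvd_or_dvd hdvd with h | h
  · exact hp.not_isUnit ((isCoprime_jNum_self hop).isUnit_of_dvd h)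
  · exact not_dvd_jDen_of_lt hp hop hoq hq hqp h

lemma Ep_j_ne_of_lt {p q : ℕ} (hp : p.Prime) (hop : Odd p) (hoq : Odd q) (hq : 1 < q)
    (hqp : q < p) [(Ep p).IsElliptic] [(Ep q).IsElliptic] : (Ep p).j ≠ (Ep q).j := by
  rw [Ep_j, Ep_j, Ne, div_eq_div_iff (Int.cast_ne_zero.mpr (jDen_ne_zero (by omega)))
    (Int.cast_ne_zero.mpr (jDen_ne_zero (by omega)))]
  exact_mod_cast jNum_mul_jDen_ne (Nat.prime_iff_prime_int.mp hp) (by simpa) (by simpa)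
    (by omega) (by omega)

theorem j_distinct_general (p q : ℕ) (hp : p.Prime) (hq : q.Prime)
    (hop : Odd p) (hoq : Odd q) (hne : p ≠ q)
    (hEp : (Ep p).IsElliptic) (hEq : (Ep q).IsElliptic) :
    (Ep p).j ≠ (Ep q).j := by
  rcases hne.lt_or_gt with h | h
  · exact (Ep_j_ne_of_lt hq hoq hop hp.one_lt h).symm
  · exact Ep_j_ne_of_lt hp hop hoq hq.one_lt h

/-- If `p` and `q` are distinct odd primes `≥ 5`, then `E_p` and `E_q` have distinct
`j`-invariants, hence are not geometrically isomorphic. -/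
theorem j_distinct (p q : ℕ) (hp : p.Prime) (hq : q.Prime)
    (hop : Odd p) (hoq : Odd q) (h5p : 5 ≤ p) (h5q : 5 ≤ q) (hne : p ≠ q)
    (hEp : (Ep p).IsElliptic) (hEq : (Ep q).IsElliptic) :
    (Ep p).j ≠ (Ep q).j :=
  j_distinct_general p q hp hq hop hoq hne hEp hEq
end
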